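/- Let $A$ be a Noetherian local ring containing a field of characteristic zero, let $\mathfrak{D}$ be a set of derivations of $A$, and let $I$ be a maximally $\mathfrak{D}$-differential ideal of $A$. Then $I$ is a prime ideal of $A$. -/

import Mathlib

/-- `d` is a derivation of the commutative ring `A`: an additive endomorphism satisfying the
Leibniz rule `d(ab) = a·d(b) + b·d(a)`. -/
def IsDeriv {A : Type*} [CommRing A] (d : A →+ A) : Prop :=
  ∀ a b : A, d (a * b) = a * d b + b * d a

/-- An ideal `I` is `𝔇`-differential if `d(I) ⊆ I` for every `d ∈ 𝔇`. -/
def IsDiffIdeal {A : Type*} [CommRing A] (𝔇 : Set (A →+ A)) (I : Ideal A) : Prop :=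
  ∀ d ∈ 𝔇, ∀ x ∈ I, d x ∈ I

/-- An ideal `I` is maximally `𝔇`-differential if it is a proper `𝔇`-differential ideal and no
ideal `J` with `I ⊊ J ⊊ A` is `𝔇`-differential. -/
def IsMaxDiffIdeal {A : Type*} [CommRing A] (𝔇 : Set (A →+ A)) (I : Ideal A) : Prop :=
  I ≠ ⊤ ∧ IsDiffIdeal 𝔇 I ∧ ∀ J : Ideal A, I < J → J < ⊤ → ¬ IsDiffIdeal 𝔇 J

/-!
Seidenberg's argument. Over `ℚ`, if `x ^ n` lies in a `d`-stable ideal then so does `(d x) ^ (2n)`: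
differentiating `x ^ (m+1) (d x) ^ (2j)` and multiplying by `d x` trades one power of `x` for two
powers of `d x`, up to the invertible factor `m + 1`. Hence the radical of a differential ideal is
differential, and a maximally differential ideal `I` is radical. For a radical differential `I`,
each colon ideal `I : a` is again differential, since `a · d(a y) ≡ a² d y` modulo `I` when
`a y ∈ I`. Maximality then forces `I : a = I` for `a ∉ I`, which is primality.
-/

section

variable {A : Type*} [CommRing A]

lemma isUnit_natCast_of_ne_zero [Algebra ℚ A] {n : ℕ} (hn : n ≠ 0) : IsUnit (n : A) := by
  simpa using (IsUnit.mk0 (n : ℚ) (Nat.cast_ne_zero.mpr hn)).map (algebraMap ℚ A)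

namespace IsDeriv

variable {d : A →+ A} (hd : IsDeriv d)
include hd

lemma map_one_eq_zero : d 1 = 0 := by
  simpa using hd 1 1

lemma mul_map_pow (y : A) (n : ℕ) : y * d (y ^ n) = n * y ^ n * d y := by
  induction n with
  | zero => simp [hd.map_one_eq_zero]
  | succ n ih =>
    rw [pow_succ, hd]
    push_cast
    linear_combination y * ih

lemma map_pow_succ (y : A) (n : ℕ) : d (y ^ (n + 1)) = (n + 1) * y ^ n * d y := by
  rw [pow_succ, hd, hd.mul_map_pow]
  ring

variable [Algebra ℚ A] {I : Ideal A} (hI : ∀ y ∈ I, d y ∈ I)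
include hI

lemma pow_mul_map_pow_mem {x : A} {m j : ℕ} (h : x ^ (m + 1) * d x ^ (2 * j) ∈ I) :
    x ^ m * d x ^ (2 * j + 2) ∈ I := by
  have hdx : d x * d (x ^ (m + 1) * d x ^ (2 * j)) =
      (2 * j * d (d x)) * (x ^ (m + 1) * d x ^ (2 * j)) +
        ((m + 1 : ℕ) : A) * (x ^ m * d x ^ (2 * j + 2)) := by
    have hpow := hd.mul_map_pow (d x) (2 * j)
    rw [hd, hd.map_pow_succ]
    push_cast at hpow ⊢
    linear_combination x ^ (m + 1) * hpow
  have hmem := I.mul_mem_left (d x) (hI _ h)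
  rw [hdx, I.add_mem_iff_right (I.mul_mem_left _ h)] at hmem
  exact (I.unit_mul_mem_iff_mem (isUnit_natCast_of_ne_zero m.succ_ne_zero)).mp hmem

lemma map_pow_mem_of_pow_mem {x : A} {n : ℕ} (h : x ^ n ∈ I) : d x ^ (2 * n) ∈ I := by
  suffices ∀ j m : ℕ, x ^ (m + j) ∈ I → x ^ m * d x ^ (2 * j) ∈ I by
    simpa using this n 0 (by simpa using h)
  intro j
  induction j with
  | zero => simp
  | succ j ih =>
    intro m hm
    exact hd.pow_mul_map_pow_mem hI (ih (m + 1) (by rwa [add_right_comm]))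

end IsDeriv

variable {𝔇 : Set (A →+ A)} {I : Ideal A}

lemma IsDiffIdeal.radical [Algebra ℚ A] (h𝔇 : ∀ d ∈ 𝔇, IsDeriv d) (hI : IsDiffIdeal 𝔇 I) :
    IsDiffIdeal 𝔇 I.radical := by
  rintro d hd x ⟨n, hn⟩
  exact ⟨2 * n, (h𝔇 d hd).map_pow_mem_of_pow_mem (hI d hd) hn⟩

lemma IsDiffIdeal.colon_singleton (h𝔇 : ∀ d ∈ 𝔇, IsDeriv d) (hI : IsDiffIdeal 𝔇 I)
    (hrad : I.IsRadical) (a : A) : IsDiffIdeal 𝔇 (I.colon {a}) := by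
  intro d hd y hy
  rw [Submodule.mem_colon_singleton, smul_eq_mul] at hy ⊢
  have hder : a * d (y * a) = a ^ 2 * d y + d a * (y * a) := by
    rw [h𝔇 d hd]
    ring
  have hsq : a ^ 2 * d y ∈ I := by
    have hmem := I.mul_mem_left a (hI d hd _ hy)
    rwa [hder, I.add_mem_iff_left (I.mul_mem_left _ hy)] at hmem
  refine hrad ⟨2, ?_⟩
  convert I.mul_mem_left (d y) hsq using 1
  ring

lemma IsMaxDiffIdeal.eq_of_le (hI : IsMaxDiffIdeal 𝔇 I) {J : Ideal A} (hIJ : I ≤ J)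
    (hJ : J ≠ ⊤) (hJ𝔇 : IsDiffIdeal 𝔇 J) : J = I := by
  by_contra hne
  exact hI.2.2 J (lt_of_le_of_ne hIJ (Ne.symm hne)) (lt_top_iff_ne_top.mpr hJ) hJ𝔇

lemma IsMaxDiffIdeal.isRadical [Algebra ℚ A] (h𝔇 : ∀ d ∈ 𝔇, IsDeriv d)
    (hI : IsMaxDiffIdeal 𝔇 I) : I.IsRadical :=
  (hI.eq_of_le I.le_radical (mt Ideal.radical_eq_top.mp hI.1) (hI.2.1.radical h𝔇)).le

end

theorem maxDiffIdeal_isPrime_of_charZero_general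
    {A : Type*} [CommRing A] [Algebra ℚ A]
    (𝔇 : Set (A →+ A)) (h𝔇 : ∀ d ∈ 𝔇, IsDeriv d)
    (I : Ideal A) (hI : IsMaxDiffIdeal 𝔇 I) :
    I.IsPrime := by
  refine ⟨hI.1, fun {a b} hab => or_iff_not_imp_left.mpr fun ha => ?_⟩
  have hcolon : I.colon {a} = I := hI.eq_of_le Ideal.le_colon
    (by simpa [Submodule.colon_eq_top_iff_subset] using ha)
    (hI.2.1.colon_singleton h𝔇 (hI.isRadical h𝔇) a)
  rw [← hcolon, Submodule.mem_colon_singleton, smul_eq_mul, mul_comm]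
  exact hab

/-- Let `A` be a Noetherian local ring containing a field of characteristic zero (i.e. a
`ℚ`-algebra), `𝔇` a set of derivations of `A`, and `I` a maximally `𝔇`-differential ideal
of `A`.  Then `I` is a prime ideal of `A`. -/
theorem maxDiffIdeal_isPrime_of_charZero
    {A : Type*} [CommRing A] [IsNoetherianRing A] [IsLocalRing A] [Algebra ℚ A]
    (𝔇 : Set (A →+ A)) (h𝔇 : ∀ d ∈ 𝔇, IsDeriv d)
    (I : Ideal A) (hI : IsMaxDiffIdeal 𝔇 I) :
    I.IsPrime :=
  maxDiffIdeal_isPrime_of_charZero_general 𝔇 h𝔇 I hI
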